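/- Let ρ be an n×n positive semidefinite complex matrix with trace 1 (a density matrix). If m and k are divisors of n with m dividing k and k dividing ¬¬m, then ℓ(m|ρ) ≤ ℓ(k|ρ) ≤ u(m|ρ). -/

import Mathlib

open Matrix BigOperators
open scoped ComplexOrder

/-- The projector `P(m)` onto the position states of subsystem `Σ(m)` embedded in `Σ(n)`:
`P(m) = ∑_{r=0}^{m-1} E_{(n/m)r}` where `E_j` is the diagonal matrix unit at `(j,j)`. -/
noncomputable def projP (n : ℕ) [NeZero n] (m : ℕ) : Matrix (ZMod n) (ZMod n) ℂ :=
  ∑ r ∈ Finset.range m,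
    Matrix.single ((n / m * r : ℕ) : ZMod n) ((n / m * r : ℕ) : ZMod n) (1 : ℂ)

/-- The lower probability `ℓ(m|ρ) = Tr(P(m) ρ)` (a real number). -/
noncomputable def lowerProb (n : ℕ) [NeZero n] (m : ℕ)
    (ρ : Matrix (ZMod n) (ZMod n) ℂ) : ℝ :=
  (Matrix.trace (projP n m * ρ)).re

/-- The negation `¬m = ∏_p p^{v_p(n)}` over primes `p` dividing `n` but not `m`. -/
def negDiv (n m : ℕ) : ℕ :=
  ∏ p ∈ n.primeFactors.filter (fun p => ¬ p ∣ m), p ^ (n.factorization p)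

/-- The upper probability `u(m|ρ) = 1 - ℓ(¬m|ρ) + ℓ(1|ρ)`. -/
noncomputable def upperProb (n : ℕ) [NeZero n] (m : ℕ)
    (ρ : Matrix (ZMod n) (ZMod n) ℂ) : ℝ :=
  1 - lowerProb n (negDiv n m) ρ + lowerProb n 1 ρ

set_option linter.unusedSectionVars false

section Aux
variable (n : ℕ) [NeZero n]

variable (n : ℕ) [NeZero n]

def Sset (d : ℕ) : Finset (ZMod n) :=
  (Finset.range d).image fun r => ((n / d * r : ℕ) : ZMod n)

lemma mul_lt_of_lt {d r : ℕ} (hd : d ∣ n) (hr : r < d) : n / d * r < n := by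
  have hd0 : 0 < d := Nat.pos_of_ne_zero (by rintro rfl; exact NeZero.ne n (Nat.eq_zero_of_zero_dvd hd))
  have h0 : 0 < n / d := Nat.div_pos (Nat.le_of_dvd (Nat.pos_of_ne_zero (NeZero.ne n)) hd) hd0
  calc n / d * r < n / d * d := (Nat.mul_lt_mul_left h0).2 hr
  _ = n := Nat.div_mul_cancel hd

lemma mem_Sset {d : ℕ} (hd : d ∣ n) {j : ZMod n} :
    j ∈ Sset n d ↔ n / d ∣ j.val := by
  constructor
  · rintro hj
    obtain ⟨r, hr, rfl⟩ := Finset.mem_image.1 hj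
    rw [ZMod.val_natCast]
    exact (Nat.dvd_mod_iff (Nat.div_dvd_of_dvd hd)).2 ⟨r, rfl⟩
  · rintro ⟨t, ht⟩
    have hv : j.val < n := ZMod.val_lt j
    have hd0 : 0 < d := Nat.pos_of_ne_zero (by rintro rfl; exact NeZero.ne n (Nat.eq_zero_of_zero_dvd hd))
    have h0 : 0 < n / d := Nat.div_pos (Nat.le_of_dvd (Nat.pos_of_ne_zero (NeZero.ne n)) hd) hd0
    have htd : t < d := by
      by_contra h
      push_neg at h
      have h1 : n / d * d ≤ n / d * t := Nat.mul_le_mul_left _ h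
      rw [Nat.div_mul_cancel hd] at h1
      omega
    refine Finset.mem_image.2 ⟨t, Finset.mem_range.2 htd, ?_⟩
    rw [← ht]
    exact ZMod.natCast_rightInverse j

lemma lowerProb_eq_sum {d : ℕ} (hd : d ∣ n) (ρ : Matrix (ZMod n) (ZMod n) ℂ) :
    lowerProb n d ρ = ∑ j ∈ Sset n d, (ρ j j).re := by
  have htr : Matrix.trace (projP n d * ρ)
      = ∑ r ∈ Finset.range d, ρ ((n / d * r : ℕ) : ZMod n) ((n / d * r : ℕ) : ZMod n) := by
    rw [projP, Finset.sum_mul, Matrix.trace_sum]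
    refine Finset.sum_congr rfl fun r _ => ?_
    simp [Matrix.trace, Matrix.diag, Matrix.mul_apply, Matrix.single, ite_and]
  rw [lowerProb, htr, Complex.re_sum, Sset, Finset.sum_image]
  intro r hr s hs h
  have h2 : ((n / d * r : ℕ) : ZMod n).val = ((n / d * s : ℕ) : ZMod n).val := congrArg ZMod.val h
  rw [ZMod.val_natCast, ZMod.val_natCast,
    Nat.mod_eq_of_lt (mul_lt_of_lt n hd (Finset.mem_range.1 hr)),
    Nat.mod_eq_of_lt (mul_lt_of_lt n hd (Finset.mem_range.1 hs))] at h2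
  have hd0 : 0 < d := Nat.pos_of_ne_zero fun h' => NeZero.ne n (Nat.eq_zero_of_zero_dvd (h' ▸ hd))
  have h0 : 0 < n / d := Nat.div_pos (Nat.le_of_dvd (Nat.pos_of_ne_zero (NeZero.ne n)) hd) hd0
  exact Nat.eq_of_mul_eq_mul_left h0 h2

lemma diag_re_nonneg {ρ : Matrix (ZMod n) (ZMod n) ℂ} (hρ : ρ.PosSemidef) (j : ZMod n) :
    0 ≤ (ρ j j).re := by
  have := hρ.re_dotProduct_nonneg (Pi.single j 1)
  simpa [dotProduct, Matrix.mulVec, Pi.single_apply, Finset.sum_ite_eq] using this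

end Aux

section Aux2
variable (n : ℕ) [NeZero n]

lemma negDiv_dvd (m : ℕ) : negDiv n m ∣ n := by
  conv_rhs => rw [← Nat.factorization_prod_pow_eq_self (NeZero.ne n)]
  rw [Finsupp.prod]
  exact Finset.prod_dvd_prod_of_subset _ _ _ (Finset.filter_subset _ _)

lemma coprime_negDiv (g : ℕ) : Nat.Coprime (negDiv n g) g := by
  rw [negDiv, Nat.coprime_prod_left_iff]
  intro p hp
  simp only [Finset.mem_filter] at hp
  exact (((Nat.prime_of_mem_primeFactors hp.1).coprime_iff_not_dvd).2 hp.2).pow_left _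

end Aux2

lemma div_dvd_div' {n m k : ℕ} (hn : n ≠ 0) (hk : k ∣ n) (hmk : m ∣ k) : n / k ∣ n / m := by
  obtain ⟨c, rfl⟩ := hmk
  have hm0 : 0 < m := Nat.pos_of_ne_zero fun h' => hn (Nat.eq_zero_of_zero_dvd (h' ▸ (dvd_trans (Dvd.intro c rfl) hk)))
  have hmn : m ∣ n := dvd_trans ⟨c, rfl⟩ hk
  refine ⟨c, Nat.eq_of_mul_eq_mul_right hm0 ?_⟩
  rw [Nat.div_mul_cancel hmn, mul_assoc, mul_comm c m, Nat.div_mul_cancel hk]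

/-- If `m ∣ k` and `k ∣ ¬¬m` (all divisors of `n`), then `ℓ(m|ρ) ≤ ℓ(k|ρ) ≤ u(m|ρ)`. -/
theorem lowerProb_le_upperProb_of_between (n : ℕ) [NeZero n]
    (ρ : Matrix (ZMod n) (ZMod n) ℂ) (hρ : ρ.PosSemidef) (htr : ρ.trace = 1)
    (m k : ℕ) (hm : m ∣ n) (hk : k ∣ n) (hmk : m ∣ k) (hknm : k ∣ negDiv n (negDiv n m)) :
    lowerProb n m ρ ≤ lowerProb n k ρ ∧ lowerProb n k ρ ≤ upperProb n m ρ := by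
  set g := negDiv n m with hgdef
  have hg : g ∣ n := negDiv_dvd n m
  have hcop : Nat.Coprime k g := Nat.Coprime.coprime_dvd_left hknm (coprime_negDiv n g)
  have hnonneg : ∀ j ∈ (Finset.univ : Finset (ZMod n)), 0 ≤ (ρ j j).re :=
    fun j _ => diag_re_nonneg n hρ j
  have hsub : Sset n m ⊆ Sset n k := by
    intro j hj
    rw [mem_Sset n hm] at hj
    rw [mem_Sset n hk]
    exact dvd_trans (div_dvd_div' (NeZero.ne n) hk hmk) hj
  have hinter : Sset n k ∩ Sset n g ⊆ {0} := by
    intro j hj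
    rw [Finset.mem_inter, mem_Sset n hk, mem_Sset n hg] at hj
    obtain ⟨⟨s, hs⟩, ⟨t, ht⟩⟩ := hj
    have h1 : n ∣ j.val * k := ⟨s, by rw [hs, mul_right_comm, Nat.div_mul_cancel hk]⟩
    have h2 : n ∣ j.val * g := ⟨t, by rw [ht, mul_right_comm, Nat.div_mul_cancel hg]⟩
    have h3 : n ∣ j.val := by
      have := Nat.dvd_gcd h1 h2
      rwa [Nat.gcd_mul_left, hcop, mul_one] at this
    have h4 : j.val = 0 := Nat.eq_zero_of_dvd_of_lt h3 (ZMod.val_lt j)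
    exact Finset.mem_singleton.2 ((ZMod.val_eq_zero j).1 h4)
  constructor
  · rw [lowerProb_eq_sum n hm, lowerProb_eq_sum n hk]
    exact Finset.sum_le_sum_of_subset_of_nonneg hsub fun j _ _ => diag_re_nonneg n hρ j
  · have hl1 : lowerProb n 1 ρ = (ρ 0 0).re := by
      rw [lowerProb_eq_sum n (one_dvd n)]
      simp [Sset]
    have htot : ∑ j : ZMod n, (ρ j j).re = 1 := by
      have := congrArg Complex.re htr
      simpa [Matrix.trace, Matrix.diag, Complex.re_sum] using this
    have hu : ∑ j ∈ Sset n k ∪ Sset n g, (ρ j j).re ≤ 1 := by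
      rw [← htot]
      exact Finset.sum_le_sum_of_subset_of_nonneg (Finset.subset_univ _)
        fun j _ _ => diag_re_nonneg n hρ j
    have hi : ∑ j ∈ Sset n k ∩ Sset n g, (ρ j j).re ≤ (ρ 0 0).re := by
      calc ∑ j ∈ Sset n k ∩ Sset n g, (ρ j j).re
          ≤ ∑ j ∈ ({0} : Finset (ZMod n)), (ρ j j).re :=
            Finset.sum_le_sum_of_subset_of_nonneg hinter fun j _ _ => diag_re_nonneg n hρ j
        _ = (ρ 0 0).re := Finset.sum_singleton _ _
    have hsum := Finset.sum_union_inter (s₁ := Sset n k) (s₂ := Sset n g)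
      (f := fun j => (ρ j j).re)
    rw [upperProb, hl1, ← hgdef, lowerProb_eq_sum n hg, lowerProb_eq_sum n hk]
    linarith
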